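/- Let α, α₁, α₂ ∈ ℝ and let (u_n)_{n≥0}, (v_n)_{n≥0} be sequences of positive reals satisfying, for all n ≥ 2, the stationary nonisospectral C-Toda system: 2α u_n + α₁ u_n(v_n − v_{n−1}) − (1/2) α₂ u_n[(v_{n−1}² − v_n²) + 4(u_{n+1} − u_{n−1}) − 4(√(v_n v_{n+1} u_{n+1}) − √(v_{n−2} v_{n−1} u_{n−1}))] = 0 and α v_n + 2α₁(√(v_n v_{n+1} u_{n+1}) − √(v_{n−1} v_n u_n)) − α₂[(v_{n−1}√(v_{n−1} v_n u_n) − v_n√(v_n v_{n+1} u_{n+1})) − 2(√(v_n v_{n+2} u_{n+1} u_{n+2}) − √(v_{n−2} v_n u_{n−1} u_n)) − (v_{n+1}√(v_n v_{n+1} u_{n+1}) − v_n√(v_{n−1} v_n u_n))] = 0. Then there exists a real constant A₀ such that for all n ≥ 1: α₁ v_n + 2nα + A₀ + (1/2)α₂(v_n² − 4u_{n+1} − 4u_n + 4√(v_n v_{n+1} u_{n+1}) + 4√(v_n v_{n−1} u_n)) = 0, and for all n ≥ 2: α√(v_n) + α₁(√(v_{n+1} u_{n+1}) − √(v_{n−1}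 u_n)) + α₂((v_n + v_{n+1}/2)√(v_{n+1} u_{n+1}) − (v_n + v_{n−1}/2)√(v_{n−1} u_n)) − √(u_{n+1}/v_{n+1})·(α₂(−2u_{n+2} − 2u_{n+1} + 2√(v_n v_{n+1} u_{n+1})) + 2(n+1)α + A₀) + √(u_n/v_{n−1})·(α₂(−2u_n − 2u_{n−1} + 2√(v_n v_{n−1} u_n)) + 2(n−1)α + A₀) = 0. -/

import Mathlib

/-!
The first stationary equation at `n` is `u n` times the difference of a first integral at `n`
and at `n - 1`, so that quantity is constant for `n ≥ 1`, and `A₀` is minus its value.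
Writing `v = p²`, `u = q²` with `p, q > 0` turns every square root into a monomial in `p, q`;
the second stationary equation, once the first integral at `n ± 1` is substituted, is then
`√(v n)` times the second equation of the discrete Painlevé system.
-/

open Real

namespace CToda

noncomputable def stationary₁ (α α₁ α₂ : ℝ) (u v : ℕ → ℝ) (n : ℕ) : ℝ :=
  2 * α * u n + α₁ * u n * (v n - v (n - 1))
    - (1 / 2) * α₂ * u n *
        (((v (n - 1)) ^ 2 - (v n) ^ 2) + 4 * (u (n + 1) - u (n - 1))
          - 4 * (√(v n * v (n + 1) * u (n + 1)) - √(v (n - 2) * v (n - 1) * u (n - 1))))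

noncomputable def stationary₂ (α α₁ α₂ : ℝ) (u v : ℕ → ℝ) (n : ℕ) : ℝ :=
  α * v n
    + 2 * α₁ * (√(v n * v (n + 1) * u (n + 1)) - √(v (n - 1) * v n * u n))
    - α₂ *
        ((v (n - 1) * √(v (n - 1) * v n * u n)
            - v n * √(v n * v (n + 1) * u (n + 1)))
          - 2 * (√(v n * v (n + 2) * u (n + 1) * u (n + 2))
              - √(v (n - 2) * v n * u (n - 1) * u n))
          - (v (n + 1) * √(v n * v (n + 1) * u (n + 1))
              - v n * √(v (n - 1) * v n * u n)))

noncomputable def firstIntegral (α α₁ α₂ : ℝ) (u v : ℕ → ℝ) (n : ℕ) : ℝ :=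
  α₁ * v n + 2 * (n : ℝ) * α
    + (1 / 2) * α₂ *
        ((v n) ^ 2 - 4 * u (n + 1) - 4 * u n
          + 4 * √(v n * v (n + 1) * u (n + 1))
          + 4 * √(v n * v (n - 1) * u n))

noncomputable def dP₂ (α α₁ α₂ : ℝ) (u v : ℕ → ℝ) (A₀ : ℝ) (n : ℕ) : ℝ :=
  α * √(v n)
    + α₁ * (√(v (n + 1) * u (n + 1)) - √(v (n - 1) * u n))
    + α₂ * ((v n + (1 / 2) * v (n + 1)) * √(v (n + 1) * u (n + 1))
        - (v n + (1 / 2) * v (n - 1)) * √(v (n - 1) * u n))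
    - √(u (n + 1) / v (n + 1)) *
        (α₂ * (-2 * u (n + 2) - 2 * u (n + 1)
            + 2 * √(v n * v (n + 1) * u (n + 1)))
          + 2 * ((n : ℝ) + 1) * α + A₀)
    + √(u n / v (n - 1)) *
        (α₂ * (-2 * u n - 2 * u (n - 1)
            + 2 * √(v n * v (n - 1) * u n))
          + 2 * ((n : ℝ) - 1) * α + A₀)

variable {α α₁ α₂ : ℝ} {u v : ℕ → ℝ}

theorem stationary₁_eq_mul_sub (m : ℕ) :
    stationary₁ α α₁ α₂ u v (m + 2)
      = u (m + 2) * (firstIntegral α α₁ α₂ u v (m + 2) - firstIntegral α α₁ α₂ u v (m + 1)) := by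
  simp only [stationary₁, firstIntegral, Nat.reduceSubDiff, Nat.add_sub_cancel, add_assoc,
    Nat.reduceAdd, mul_comm (v (m + 1)) (v m), mul_comm (v (m + 2)) (v (m + 1))]
  push_cast
  ring

theorem firstIntegral_eq_of_stationary (hu : ∀ n, 0 < u n)
    (h1 : ∀ n, 2 ≤ n → stationary₁ α α₁ α₂ u v n = 0) (n : ℕ) (hn : 1 ≤ n) :
    firstIntegral α α₁ α₂ u v n = firstIntegral α α₁ α₂ u v 1 := by
  induction n, hn using Nat.le_induction with
  | base => rfl
  | succ n hn ih =>
    obtain ⟨m, rfl⟩ : ∃ m, n = m + 1 := ⟨n - 1, by omega⟩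
    have h := h1 (m + 2) (by omega)
    rw [stationary₁_eq_mul_sub, mul_eq_zero, sub_eq_zero] at h
    exact ih ▸ h.resolve_left (hu _).ne'

theorem exists_pos_sq_eq {ι : Type*} {v : ι → ℝ} (hv : ∀ i, 0 < v i) :
    ∃ p : ι → ℝ, (∀ i, 0 < p i) ∧ v = fun i => p i ^ 2 :=
  ⟨fun i => √(v i), fun i => sqrt_pos.2 (hv i), funext fun i => (sq_sqrt (hv i).le).symm⟩

theorem sqrt_mul_dP₂ (hu : ∀ n, 0 < u n) (hv : ∀ n, 0 < v n) (A₀ : ℝ) (m : ℕ) :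
    √(v (m + 2)) * dP₂ α α₁ α₂ u v A₀ (m + 2) = stationary₂ α α₁ α₂ u v (m + 2)
      - √(v (m + 2) * u (m + 3) / v (m + 3)) * (firstIntegral α α₁ α₂ u v (m + 3) + A₀)
      + √(v (m + 2) * u (m + 2) / v (m + 1)) * (firstIntegral α α₁ α₂ u v (m + 1) + A₀) := by
  obtain ⟨p, hp, rfl⟩ := exists_pos_sq_eq hv
  obtain ⟨q, hq, rfl⟩ := exists_pos_sq_eq hu
  simp only [dP₂, stationary₂, firstIntegral, Nat.reduceSubDiff, Nat.add_sub_cancel,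
    add_assoc, Nat.reduceAdd, ← mul_pow, ← div_pow, sqrt_sq_eq_abs, abs_mul, abs_div,
    abs_of_pos (hp _), abs_of_pos (hq _)]
  have hp₁ : p (m + 1) ≠ 0 := (hp _).ne'
  have hp₃ : p (m + 3) ≠ 0 := (hp _).ne'
  push_cast
  field_simp
  ring

end CToda

theorem stationary_CToda_dP
    (α α₁ α₂ : ℝ) (u v : ℕ → ℝ)
    (hu : ∀ n, 0 < u n) (hv : ∀ n, 0 < v n)
    (h1 : ∀ n : ℕ, 2 ≤ n →
      2 * α * u n + α₁ * u n * (v n - v (n - 1))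
        - (1 / 2) * α₂ * u n *
            (((v (n - 1)) ^ 2 - (v n) ^ 2) + 4 * (u (n + 1) - u (n - 1))
              - 4 * (Real.sqrt (v n * v (n + 1) * u (n + 1))
                  - Real.sqrt (v (n - 2) * v (n - 1) * u (n - 1)))) = 0)
    (h2 : ∀ n : ℕ, 2 ≤ n →
      α * v n
        + 2 * α₁ * (Real.sqrt (v n * v (n + 1) * u (n + 1))
            - Real.sqrt (v (n - 1) * v n * u n))
        - α₂ *
            ((v (n - 1) * Real.sqrt (v (n - 1) * v n * u n)
                - v n * Real.sqrt (v n * v (n + 1) * u (n + 1)))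
              - 2 * (Real.sqrt (v n * v (n + 2) * u (n + 1) * u (n + 2))
                  - Real.sqrt (v (n - 2) * v n * u (n - 1) * u n))
              - (v (n + 1) * Real.sqrt (v n * v (n + 1) * u (n + 1))
                  - v n * Real.sqrt (v (n - 1) * v n * u n))) = 0) :
    ∃ A₀ : ℝ,
      (∀ n : ℕ, 1 ≤ n →
        α₁ * v n + 2 * (n : ℝ) * α + A₀
          + (1 / 2) * α₂ *
              ((v n) ^ 2 - 4 * u (n + 1) - 4 * u n
                + 4 * Real.sqrt (v n * v (n + 1) * u (n + 1))
                + 4 * Real.sqrt (v n * v (n - 1) * u n)) = 0) ∧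
      (∀ n : ℕ, 2 ≤ n →
        α * Real.sqrt (v n)
          + α₁ * (Real.sqrt (v (n + 1) * u (n + 1)) - Real.sqrt (v (n - 1) * u n))
          + α₂ * ((v n + (1 / 2) * v (n + 1)) * Real.sqrt (v (n + 1) * u (n + 1))
              - (v n + (1 / 2) * v (n - 1)) * Real.sqrt (v (n - 1) * u n))
          - Real.sqrt (u (n + 1) / v (n + 1)) *
              (α₂ * (-2 * u (n + 2) - 2 * u (n + 1)
                  + 2 * Real.sqrt (v n * v (n + 1) * u (n + 1)))
                + 2 * ((n : ℝ) + 1) * α + A₀)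
          + Real.sqrt (u n / v (n - 1)) *
              (α₂ * (-2 * u n - 2 * u (n - 1)
                  + 2 * Real.sqrt (v n * v (n - 1) * u n))
                + 2 * ((n : ℝ) - 1) * α + A₀) = 0) := by
  have hI := CToda.firstIntegral_eq_of_stationary hu h1
  refine ⟨-CToda.firstIntegral α α₁ α₂ u v 1, fun n hn => ?_, fun n hn => ?_⟩
  · rw [← hI n hn, CToda.firstIntegral]
    ring
  · obtain ⟨m, rfl⟩ : ∃ m, n = m + 2 := ⟨n - 2, by omega⟩
    have h := CToda.sqrt_mul_dP₂ (α := α) (α₁ := α₁) (α₂ := α₂) hu hv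
      (-CToda.firstIntegral α α₁ α₂ u v 1) m
    rw [show CToda.stationary₂ α α₁ α₂ u v (m + 2) = 0 from h2 (m + 2) (by omega),
      hI (m + 3) (by omega), hI (m + 1) (by omega)] at h
    simp only [add_neg_cancel, mul_zero, sub_zero, add_zero] at h
    exact (mul_eq_zero.1 h).resolve_left (sqrt_pos.2 (hv _)).ne'
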